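/- Let x₁,…,x_t, x'₁,…,x'_t ∈ ℝ^d with Σᵢ ‖x'ᵢ − xᵢ‖₂² ≤ ε² and Σᵢ ‖xᵢ‖₂² ≤ t·d. Let G_t = (1/t)Σᵢ xᵢxᵢᵀ and G'_t = (1/t)Σᵢ x'ᵢx'ᵢᵀ. Then ‖G'_t − G_t‖₂ ≤ ε²/t + 2ε√d/√t, where ‖·‖₂ is the spectral norm. -/

import Mathlib

/-! With `δᵢ = x'ᵢ - xᵢ` one has
`⟪x'ᵢ, v⟫ x'ᵢ - ⟪xᵢ, v⟫ xᵢ = ⟪δᵢ, v⟫ xᵢ + ⟪xᵢ, v⟫ δᵢ + ⟪δᵢ, v⟫ δᵢ`, whose norm is at most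
`(2 ‖δᵢ‖ ‖xᵢ‖ + ‖δᵢ‖²) ‖v‖`. Summing over `i` and bounding `Σ ‖δᵢ‖ ‖xᵢ‖` by Cauchy–Schwarz
gives `‖(G'_t - G_t) v‖ ≤ (ε² + 2 ε √(t d)) ‖v‖ / t`. -/

open scoped BigOperators

/-- Euclidean norm of a vector in `Fin n → ℝ`. -/
noncomputable def vecEnorm {n : ℕ} (v : Fin n → ℝ) : ℝ :=
  Real.sqrt (∑ i, (v i) ^ 2)

/-- Spectral norm of a square real matrix, as the supremum of `‖M v‖` over
unit vectors `v`. -/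
noncomputable def sNorm {d : ℕ} (M : Matrix (Fin d) (Fin d) ℝ) : ℝ :=
  ⨆ v : {v : Fin d → ℝ // vecEnorm v = 1}, vecEnorm (M.mulVec v.1)

open Matrix
open scoped RealInnerProductSpace

section InnerProductSpace

variable {E : Type*} [NormedAddCommGroup E] [InnerProductSpace ℝ E]

theorem norm_inner_smul_self_sub_inner_smul_self_le (a b v : E) :
    ‖⟪b, v⟫ • b - ⟪a, v⟫ • a‖ ≤ (2 * ‖b - a‖ * ‖a‖ + ‖b - a‖ ^ 2) * ‖v‖ := by
  set δ := b - a
  have hb : b = a + δ := by simp [δ]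
  have hsplit : ⟪b, v⟫ • b - ⟪a, v⟫ • a = ⟪δ, v⟫ • a + ⟪a, v⟫ • δ + ⟪δ, v⟫ • δ := by
    rw [hb, inner_add_left, add_smul, smul_add, smul_add]
    abel
  have hδv := abs_real_inner_le_norm δ v
  have hav := abs_real_inner_le_norm a v
  rw [hsplit]
  calc ‖⟪δ, v⟫ • a + ⟪a, v⟫ • δ + ⟪δ, v⟫ • δ‖
      ≤ |⟪δ, v⟫| * ‖a‖ + |⟪a, v⟫| * ‖δ‖ + |⟪δ, v⟫| * ‖δ‖ := by
        refine norm_add₃_le.trans ?_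
        simp only [norm_smul, Real.norm_eq_abs, le_refl]
    _ ≤ ‖δ‖ * ‖v‖ * ‖a‖ + ‖a‖ * ‖v‖ * ‖δ‖ + ‖δ‖ * ‖v‖ * ‖δ‖ := by gcongr
    _ = (2 * ‖δ‖ * ‖a‖ + ‖δ‖ ^ 2) * ‖v‖ := by ring

theorem norm_sum_inner_smul_self_sub_le {ι : Type*} (s : Finset ι) (x x' : ι → E) (v : E) :
    ‖∑ i ∈ s, (⟪x' i, v⟫ • x' i - ⟪x i, v⟫ • x i)‖
      ≤ (2 * √(∑ i ∈ s, ‖x' i - x i‖ ^ 2) * √(∑ i ∈ s, ‖x i‖ ^ 2)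
          + ∑ i ∈ s, ‖x' i - x i‖ ^ 2) * ‖v‖ := by
  have hCS := Real.sum_mul_le_sqrt_mul_sqrt s (fun i ↦ ‖x' i - x i‖) (fun i ↦ ‖x i‖)
  calc ‖∑ i ∈ s, (⟪x' i, v⟫ • x' i - ⟪x i, v⟫ • x i)‖
      ≤ ∑ i ∈ s, (2 * ‖x' i - x i‖ * ‖x i‖ + ‖x' i - x i‖ ^ 2) * ‖v‖ :=
        (norm_sum_le _ _).trans
          (Finset.sum_le_sum fun i _ ↦ norm_inner_smul_self_sub_inner_smul_self_le _ _ _)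
    _ = (2 * ∑ i ∈ s, ‖x' i - x i‖ * ‖x i‖ + ∑ i ∈ s, ‖x' i - x i‖ ^ 2) * ‖v‖ := by
        rw [← Finset.sum_mul, Finset.sum_add_distrib, Finset.mul_sum]
        simp only [mul_assoc]
    _ ≤ _ := by gcongr ?_ * _; linarith

end InnerProductSpace

theorem Matrix.sum_vecMulVec_self_mulVec {ι m α : Type*} [CommSemiring α] [Fintype m]
    (s : Finset ι) (x : ι → m → α) (v : m → α) :
    (∑ i ∈ s, vecMulVec (x i) (x i)) *ᵥ v = ∑ i ∈ s, (x i ⬝ᵥ v) • x i := by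
  simp only [sum_mulVec, vecMulVec_mulVec, op_smul_eq_smul]

theorem vecEnorm_eq_norm_toLp {n : ℕ} (v : Fin n → ℝ) : vecEnorm v = ‖WithLp.toLp 2 v‖ := by
  simp [vecEnorm, EuclideanSpace.norm_eq]

theorem vecEnorm_smul {n : ℕ} (c : ℝ) (v : Fin n → ℝ) : vecEnorm (c • v) = |c| * vecEnorm v := by
  simp only [vecEnorm_eq_norm_toLp, WithLp.toLp_smul, norm_smul, Real.norm_eq_abs]

theorem sNorm_le_of_forall_vecEnorm_eq_one {d : ℕ} {M : Matrix (Fin d) (Fin d) ℝ} {C : ℝ}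
    (hC : 0 ≤ C) (h : ∀ v, vecEnorm v = 1 → vecEnorm (M *ᵥ v) ≤ C) : sNorm M ≤ C :=
  Real.iSup_le (fun v ↦ h v.1 v.2) hC

theorem vecEnorm_sum_vecMulVec_sub_mulVec_le {n : ℕ} {ι : Type*} (s : Finset ι)
    (x x' : ι → Fin n → ℝ) (v : Fin n → ℝ) :
    vecEnorm ((∑ i ∈ s, vecMulVec (x' i) (x' i) - ∑ i ∈ s, vecMulVec (x i) (x i)) *ᵥ v)
      ≤ (2 * √(∑ i ∈ s, vecEnorm (x' i - x i) ^ 2) * √(∑ i ∈ s, vecEnorm (x i) ^ 2)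
          + ∑ i ∈ s, vecEnorm (x' i - x i) ^ 2) * vecEnorm v := by
  have hinner : ∀ a : Fin n → ℝ, a ⬝ᵥ v = ⟪WithLp.toLp 2 a, WithLp.toLp 2 v⟫ := fun a ↦ by
    simp [EuclideanSpace.inner_toLp_toLp, dotProduct_comm]
  rw [sub_mulVec, sum_vecMulVec_self_mulVec, sum_vecMulVec_self_mulVec, ← Finset.sum_sub_distrib]
  simp only [hinner, vecEnorm_eq_norm_toLp, WithLp.toLp_sum, WithLp.toLp_sub, WithLp.toLp_smul]
  exact norm_sum_inner_smul_self_sub_le s _ _ _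

theorem gram_perturbation_general {t d : ℕ}
    (x x' : Fin t → (Fin d → ℝ)) (ε : ℝ) (hε : 0 ≤ ε)
    (hpert : ∑ i, vecEnorm (x' i - x i) ^ 2 ≤ ε ^ 2)
    (hx : ∑ i, vecEnorm (x i) ^ 2 ≤ (t : ℝ) * d) :
    sNorm ((t : ℝ)⁻¹ • ∑ i, Matrix.vecMulVec (x' i) (x' i)
          - (t : ℝ)⁻¹ • ∑ i, Matrix.vecMulVec (x i) (x i))
      ≤ ε ^ 2 / t + 2 * ε * Real.sqrt d / Real.sqrt t := by
  have hsqrt_pert : √(∑ i, vecEnorm (x' i - x i) ^ 2) ≤ ε :=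
    (Real.sqrt_le_sqrt hpert).trans_eq (Real.sqrt_sq hε)
  have hsqrt_x : √(∑ i, vecEnorm (x i) ^ 2) ≤ √t * √d :=
    (Real.sqrt_le_sqrt hx).trans_eq (Real.sqrt_mul (Nat.cast_nonneg _) _)
  have hinv_sqrt : (t : ℝ)⁻¹ * √t = (√t)⁻¹ := by
    rw [inv_mul_eq_div, Real.sqrt_div_self', one_div]
  refine sNorm_le_of_forall_vecEnorm_eq_one (by positivity) fun v hv ↦ ?_
  have hbound := vecEnorm_sum_vecMulVec_sub_mulVec_le Finset.univ x x' v
  rw [hv, mul_one] at hbound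
  rw [← smul_sub, smul_mulVec, vecEnorm_smul, abs_of_nonneg (by positivity)]
  calc _ ≤ (t : ℝ)⁻¹ * (2 * ε * (√t * √d) + ε ^ 2) := by
        gcongr
        exact hbound.trans (by gcongr)
    _ = _ := by linear_combination (2 * ε * √d) * hinv_sqrt

/-- perturbation bound for empirical second-moment matrices:
if `Σᵢ‖x'ᵢ − xᵢ‖² ≤ ε²` and `Σᵢ‖xᵢ‖² ≤ t d`, then
`‖G'_t − G_t‖₂ ≤ ε²/t + 2ε√d/√t`. -/
theorem gram_perturbation {t d : ℕ} (ht : 0 < t)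
    (x x' : Fin t → (Fin d → ℝ)) (ε : ℝ) (hε : 0 ≤ ε)
    (hpert : ∑ i, vecEnorm (x' i - x i) ^ 2 ≤ ε ^ 2)
    (hx : ∑ i, vecEnorm (x i) ^ 2 ≤ (t : ℝ) * d) :
    sNorm ((t : ℝ)⁻¹ • ∑ i, Matrix.vecMulVec (x' i) (x' i)
          - (t : ℝ)⁻¹ • ∑ i, Matrix.vecMulVec (x i) (x i))
      ≤ ε ^ 2 / t + 2 * ε * Real.sqrt d / Real.sqrt t :=
  gram_perturbation_general x x' ε hε hpert hx
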